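/- arXiv:1012.5904 — 5 statements merged into one kernel-verified Lean document; each statement's English description precedes it below -/
import Mathlib

section
/- All nonzero coefficients of q_n(a,b) have the same sign (in fact are all positive, given the normalization (a−b)·q_n = b·(a^{n+1}(1+b+b²+ab²) − b^{n+1}(1+a+ab+ab²))) for every n ≥ 0. -/
/-- The Laurent monomial `a^i b^j` in `ℤ[a^{±1}, b^{±1}] = ℤ[ℤ²]`. -/
noncomputable def lmon (i j : ℤ) : AddMonoidAlgebra ℤ (ℤ × ℤ) :=
  AddMonoidAlgebra.single (i, j) 1

noncomputable def Qaux : ℕ → AddMonoidAlgebra ℤ (ℤ × ℤ)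
  | 0 => lmon 0 1 + lmon 1 3
  | n + 1 => lmon 1 0 * Qaux n +
      (lmon 0 1) ^ (n + 2) * (1 + lmon 1 0 + lmon 1 0 * lmon 0 1 + lmon 1 0 * (lmon 0 1) ^ 2)

lemma Qaux_eq (n : ℕ) : (lmon 1 0 - lmon 0 1) * Qaux n =
      lmon 0 1 * ((lmon 1 0) ^ (n + 1) *
          (1 + lmon 0 1 + (lmon 0 1) ^ 2 + lmon 1 0 * (lmon 0 1) ^ 2)
        - (lmon 0 1) ^ (n + 1) *
          (1 + lmon 1 0 + lmon 1 0 * lmon 0 1 + lmon 1 0 * (lmon 0 1) ^ 2)) := by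
  induction n with
  | zero =>
      show (lmon 1 0 - lmon 0 1) * (lmon 0 1 + lmon 1 3) = _
      have h3 : lmon 1 3 = lmon 1 0 * (lmon 0 1) ^ 3 := by
        simp [lmon, AddMonoidAlgebra.single_pow, AddMonoidAlgebra.single_mul_single]
      rw [h3]; ring
  | succ n ih =>
      show (lmon 1 0 - lmon 0 1) * (lmon 1 0 * Qaux n + _) = _
      rw [mul_add, ← mul_assoc, mul_comm (lmon 1 0 - lmon 0 1) (lmon 1 0), mul_assoc, ih]
      ring

lemma lmon_apply_nonneg (i j : ℤ) (g : ℤ × ℤ) : 0 ≤ ((lmon i j).coeff : (ℤ × ℤ) →₀ ℤ) g := by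
  classical
  simp only [lmon, AddMonoidAlgebra.coeff_single, Finsupp.single_apply]
  split <;> norm_num

lemma Qaux_nonneg (n : ℕ) (g : ℤ × ℤ) : 0 ≤ ((Qaux n).coeff : (ℤ × ℤ) →₀ ℤ) g := by
  induction n generalizing g with
  | zero =>
      show 0 ≤ ((lmon 0 1 + lmon 1 3 : AddMonoidAlgebra ℤ (ℤ × ℤ)).coeff : (ℤ × ℤ) →₀ ℤ) g
      rw [AddMonoidAlgebra.coeff_add, Finsupp.add_apply]
      exact add_nonneg (lmon_apply_nonneg _ _ _) (lmon_apply_nonneg _ _ _)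
  | succ n ih =>
      have hrest : (lmon 0 1) ^ (n + 2) *
          (1 + lmon 1 0 + lmon 1 0 * lmon 0 1 + lmon 1 0 * (lmon 0 1) ^ 2)
          = lmon 0 (n + 2) + lmon 1 (n + 2) + lmon 1 (n + 3) + lmon 1 (n + 4) := by
        have h1 : (1 : AddMonoidAlgebra ℤ (ℤ × ℤ)) = lmon 0 0 := rfl
        simp only [h1, lmon, AddMonoidAlgebra.single_pow, one_pow,
          AddMonoidAlgebra.single_mul_single, mul_add, one_mul]
        have e1 : ((0 : ℤ), (n : ℤ) + 2) + 1 = ((1 : ℤ), (n : ℤ) + 3) := by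
          rw [Prod.ext_iff]
          constructor <;> simp [Prod.fst_add, Prod.snd_add] <;> ring
        have e2 : ((1 : ℤ), (n : ℤ) + 2 + 2) = ((1 : ℤ), (n : ℤ) + 4) := by norm_num; ring
        norm_num [e1, e2]
        rw [show ((1 : ℤ), (n : ℤ) + 2 + 1) = ((1 : ℤ), (n : ℤ) + 3) from Prod.ext rfl (by ring)]
      show 0 ≤ ((lmon 1 0 * Qaux n + _ : AddMonoidAlgebra ℤ (ℤ × ℤ)).coeff : (ℤ × ℤ) →₀ ℤ) g
      have addap : ∀ (x y : AddMonoidAlgebra ℤ (ℤ × ℤ)) (h : ℤ × ℤ),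
          ((x + y : AddMonoidAlgebra ℤ (ℤ × ℤ)).coeff : (ℤ × ℤ) →₀ ℤ) h
            = (x.coeff : (ℤ × ℤ) →₀ ℤ) h + (y.coeff : (ℤ × ℤ) →₀ ℤ) h := fun _ _ _ => rfl
      rw [hrest, addap]
      have hmul : ((lmon 1 0 * Qaux n : AddMonoidAlgebra ℤ (ℤ × ℤ)).coeff : (ℤ × ℤ) →₀ ℤ) g
          = ((Qaux n).coeff : (ℤ × ℤ) →₀ ℤ) (-(1, 0) + g) := by
        rw [show lmon 1 0 = AddMonoidAlgebra.single ((1 : ℤ), (0 : ℤ)) (1 : ℤ) from rfl,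
          AddMonoidAlgebra.coeff_single_mul_apply, one_mul]
      rw [hmul]
      refine add_nonneg (ih _) ?_
      simp only [addap]
      exact add_nonneg (add_nonneg (add_nonneg (lmon_apply_nonneg _ _ _)
        (lmon_apply_nonneg _ _ _)) (lmon_apply_nonneg _ _ _)) (lmon_apply_nonneg _ _ _)

lemma amb_ne : (lmon 1 0 - lmon 0 1 : AddMonoidAlgebra ℤ (ℤ × ℤ)) ≠ 0 := by
  intro h
  have h2 : lmon 1 0 = lmon 0 1 := sub_eq_zero.mp h
  have h3 : ((lmon 1 0).coeff : (ℤ × ℤ) →₀ ℤ) ((1 : ℤ), (0 : ℤ))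
      = ((lmon 0 1).coeff : (ℤ × ℤ) →₀ ℤ) ((1 : ℤ), (0 : ℤ)) := by rw [h2]
  simp [lmon, AddMonoidAlgebra.coeff_single, Finsupp.single_apply, Prod.ext_iff] at h3

/-- With the normalization `(a−b)·q_n = b·(a^{n+1}(1+b+b²+ab²) − b^{n+1}(1+a+ab+ab²))`,
all nonzero coefficients of `q_n` are positive (in particular of the same sign),
for every `n ≥ 0`. -/
theorem stmt4 (q : ℕ → AddMonoidAlgebra ℤ (ℤ × ℤ))
    (hq : ∀ n : ℕ, (lmon 1 0 - lmon 0 1) * q n =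
      lmon 0 1 * ((lmon 1 0) ^ (n + 1) *
          (1 + lmon 0 1 + (lmon 0 1) ^ 2 + lmon 1 0 * (lmon 0 1) ^ 2)
        - (lmon 0 1) ^ (n + 1) *
          (1 + lmon 1 0 + lmon 1 0 * lmon 0 1 + lmon 1 0 * (lmon 0 1) ^ 2))) :
    ∀ (n : ℕ) (g : ℤ × ℤ), ((q n).coeff : (ℤ × ℤ) →₀ ℤ) g ≠ 0 → 0 < ((q n).coeff : (ℤ × ℤ) →₀ ℤ) g := by
  have hqQ : ∀ n, q n = Qaux n := by
    intro n
    have h : (lmon 1 0 - lmon 0 1) * q n = (lmon 1 0 - lmon 0 1) * Qaux n := by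
      rw [hq n, Qaux_eq n]
    exact mul_left_cancel₀ amb_ne h
  intro n g hg
  rw [hqQ] at hg ⊢
  exact lt_of_le_of_ne (Qaux_nonneg n g) (Ne.symm hg)
end

section
/- The supports in ℤ² of τ₁ = (a³ + au³ + a²u³ + au⁶ + a²u⁶ + u⁹)(1+u²+u⁴) and τ₁' = (b⁵ + bx³ + b²x³ + b³x³ + b⁴x³ + x⁶)(1+x+x²) are not related by any affine isomorphism of ℤ²: the support of τ₁' contains a translate of the full 4×3 grid {0,1,2,3}×{0,1,2}, while the support of τ₁ contains no affine image of such a 12-point grid pattern matching its cardinality constraints (indeed |Supp(τ₁)| = 18 and Supp(τ₁) contains no affine-equivalent copy of {0,…,3}×{0,…,2} of 12 collinear-structured points, whereas Supp(τ₁') does). -/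
/-- Support of `τ₁ = (a³ + au³ + a²u³ + au⁶ + a²u⁶ + u⁹)(1+u²+u⁴)` in `ℤ²`. -/
def S8 : Set (ℤ × ℤ) :=
  {(3, 0), (3, 2), (3, 4), (1, 3), (1, 5), (1, 7), (2, 3), (2, 5), (2, 7),
   (1, 6), (1, 8), (1, 10), (2, 6), (2, 8), (2, 10), (0, 9), (0, 11), (0, 13)}

/-- Support of `τ₁' = (b⁵ + bx³ + b²x³ + b³x³ + b⁴x³ + x⁶)(1+x+x²)` in `ℤ²`. -/
def S8' : Set (ℤ × ℤ) :=
  {(5, 0), (5, 1), (5, 2), (1, 3), (1, 4), (1, 5), (2, 3), (2, 4), (2, 5),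
   (3, 3), (3, 4), (3, 5), (4, 3), (4, 4), (4, 5), (0, 6), (0, 7), (0, 8)}

/-- The `4 × 3` grid `{0,1,2,3} × {0,1,2}` in `ℤ²`. -/
def grid8 : Set (ℤ × ℤ) := ({0, 1, 2, 3} : Set ℤ) ×ˢ ({0, 1, 2} : Set ℤ)

def L8 : List (ℤ × ℤ) :=
  [(3, 0), (3, 2), (3, 4), (1, 3), (1, 5), (1, 7), (2, 3), (2, 5), (2, 7),
   (1, 6), (1, 8), (1, 10), (2, 6), (2, 8), (2, 10), (0, 9), (0, 11), (0, 13)]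

set_option maxRecDepth 100000 in
set_option maxHeartbeats 4000000 in
theorem key8 : ∀ c ∈ L8, ∀ q ∈ L8, ∀ r ∈ L8,
    ¬ (((q.1 - c.1).ediv 3 * (r.2 - c.2).ediv 2 - (q.2 - c.2).ediv 3 * (r.1 - c.1).ediv 2 = 1 ∨
        (q.1 - c.1).ediv 3 * (r.2 - c.2).ediv 2 - (q.2 - c.2).ediv 3 * (r.1 - c.1).ediv 2 = -1) ∧
       ∀ i ∈ [(0:ℤ),1,2,3], ∀ j ∈ [(0:ℤ),1,2],
         (c.1 + i * (q.1 - c.1).ediv 3 + j * (r.1 - c.1).ediv 2,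
          c.2 + i * (q.2 - c.2).ediv 3 + j * (r.2 - c.2).ediv 2) ∈ L8) := by
  decide

lemma mem_S8_iff (p : ℤ × ℤ) : p ∈ S8 ↔ p ∈ L8 := by
  simp [S8, L8]

lemma linear_apply (A : (ℤ × ℤ) ≃ₗ[ℤ] ℤ × ℤ) (p : ℤ × ℤ) :
    A p = p.1 • A (1, 0) + p.2 • A (0, 1) := by
  have hp : p = p.1 • ((1, 0) : ℤ × ℤ) + p.2 • ((0, 1) : ℤ × ℤ) := by
    simp [Prod.ext_iff]
  calc A p = A (p.1 • ((1, 0) : ℤ × ℤ) + p.2 • ((0, 1) : ℤ × ℤ)) := by rw [← hp]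
  _ = p.1 • A (1, 0) + p.2 • A (0, 1) := by
      rw [map_add, map_smul, map_smul]

lemma noAffine8 : ¬ ∃ (A : (ℤ × ℤ) ≃ₗ[ℤ] ℤ × ℤ) (c : ℤ × ℤ),
    (fun v => A v + c) '' grid8 ⊆ S8 := by
  rintro ⟨A, c, h⟩
  set v := A (1, 0) with hv
  set w := A (0, 1) with hw
  -- membership facts for grid images
  have hmem : ∀ i ∈ [(0:ℤ),1,2,3], ∀ j ∈ [(0:ℤ),1,2],
      (c.1 + i * v.1 + j * w.1, c.2 + i * v.2 + j * w.2) ∈ L8 := by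
    intro i hi j hj
    rw [← mem_S8_iff]
    have hg : ((i, j) : ℤ × ℤ) ∈ grid8 := by
      simp only [List.mem_cons, List.mem_singleton, List.not_mem_nil, or_false] at hi hj
      simp [grid8]
      constructor
      · rcases hi with rfl|rfl|rfl|rfl <;> simp
      · rcases hj with rfl|rfl|rfl <;> simp
    have this : A (i, j) + c ∈ S8 := h ⟨(i, j), hg, rfl⟩
    rw [linear_apply A (i, j)] at this
    convert this using 2 <;> simp [Prod.ext_iff, mul_comm] <;> ring
  -- determinant is a unit
  have h1 := A.apply_symm_apply (1, 0)
  have h2 := A.apply_symm_apply (0, 1)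
  set v' := A.symm (1, 0) with hv'
  set w' := A.symm (0, 1) with hw'
  rw [linear_apply A v'] at h1
  rw [linear_apply A w'] at h2
  rw [← hv, ← hw, Prod.ext_iff] at h1 h2
  simp only [Prod.fst_add, Prod.snd_add, Prod.smul_fst, Prod.smul_snd, smul_eq_mul] at h1 h2
  obtain ⟨e1, e2⟩ := h1
  obtain ⟨e3, e4⟩ := h2
  have hdet : IsUnit (v.1 * w.2 - v.2 * w.1) := by
    apply IsUnit.of_mul_eq_one (v'.1 * w'.2 - v'.2 * w'.1)
    have : (v.1 * w.2 - v.2 * w.1) * (v'.1 * w'.2 - v'.2 * w'.1) =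
        (v'.1 * v.1 + v'.2 * w.1) * (w'.1 * v.2 + w'.2 * w.2) -
        (v'.1 * v.2 + v'.2 * w.2) * (w'.1 * v.1 + w'.2 * w.1) := by ring
    rw [this, e1, e2, e3, e4]; ring
  rw [Int.isUnit_iff] at hdet
  -- apply the decidable key lemma
  have hc : c ∈ L8 := by
    have h00 := hmem 0 (by simp) 0 (by simp)
    simpa using h00
  have hq : ((c.1 + 3 * v.1, c.2 + 3 * v.2) : ℤ × ℤ) ∈ L8 := by
    have := hmem 3 (by simp) 0 (by simp)
    simpa using this
  have hr : ((c.1 + 2 * w.1, c.2 + 2 * w.2) : ℤ × ℤ) ∈ L8 := by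
    have := hmem 0 (by simp) 2 (by simp)
    simpa using this
  have key := key8 c hc (c.1 + 3 * v.1, c.2 + 3 * v.2) hq (c.1 + 2 * w.1, c.2 + 2 * w.2) hr
  have dv1 : ((c.1 + 3 * v.1) - c.1).ediv 3 = v.1 := by
    rw [add_sub_cancel_left]; exact Int.mul_ediv_cancel_left v.1 (by norm_num)
  have dv2 : ((c.2 + 3 * v.2) - c.2).ediv 3 = v.2 := by
    rw [add_sub_cancel_left]; exact Int.mul_ediv_cancel_left v.2 (by norm_num)
  have dw1 : ((c.1 + 2 * w.1) - c.1).ediv 2 = w.1 := by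
    rw [add_sub_cancel_left]; exact Int.mul_ediv_cancel_left w.1 (by norm_num)
  have dw2 : ((c.2 + 2 * w.2) - c.2).ediv 2 = w.2 := by
    rw [add_sub_cancel_left]; exact Int.mul_ediv_cancel_left w.2 (by norm_num)
  simp only [dv1, dv2, dw1, dw2] at key
  exact key ⟨by rcases hdet with h|h; exacts [Or.inl h, Or.inr h], hmem⟩

/-- The supports of `τ₁` and `τ₁'` are not related by any affine isomorphism
`v ↦ A v + c` of `ℤ²`: the support of `τ₁'` contains a translate of the full
`4 × 3` grid, while the support of `τ₁` (of cardinality 18) contains no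
affine image of such a 12-point grid. -/
theorem stmt8 :
    (∃ c : ℤ × ℤ, (fun p => p + c) '' grid8 ⊆ S8') ∧
    (¬ ∃ (A : (ℤ × ℤ) ≃ₗ[ℤ] ℤ × ℤ) (c : ℤ × ℤ),
      (fun v => A v + c) '' grid8 ⊆ S8) ∧
    (¬ ∃ (A : (ℤ × ℤ) ≃ₗ[ℤ] ℤ × ℤ) (c : ℤ × ℤ),
      (fun v => A v + c) '' S8 = S8') := by
  have part1 : (fun p => p + ((1, 3) : ℤ × ℤ)) '' grid8 ⊆ S8' := by
    rintro p ⟨⟨a, b⟩, hg, rfl⟩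
    simp only [grid8, Set.mem_prod] at hg
    obtain ⟨ha, hb⟩ := hg
    simp only [Set.mem_insert_iff, Set.mem_singleton_iff] at ha hb
    rcases ha with rfl|rfl|rfl|rfl <;> rcases hb with rfl|rfl|rfl <;>
      simp only [Prod.mk_add_mk, S8', Set.mem_insert_iff, Set.mem_singleton_iff,
        Prod.mk.injEq] <;> norm_num
  refine ⟨⟨(1, 3), part1⟩, noAffine8, ?_⟩
  rintro ⟨A, c, h⟩
  apply noAffine8
  refine ⟨A.symm, A.symm ((1, 3) - c), ?_⟩
  rintro p ⟨g, hg, rfl⟩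
  have h1 : g + (1, 3) ∈ S8' := part1 ⟨g, hg, rfl⟩
  rw [← h] at h1
  obtain ⟨s, hs, hsq⟩ := h1
  change A s + c = g + (1, 3) at hsq
  show A.symm g + A.symm ((1, 3) - c) ∈ S8
  have : A.symm g + A.symm ((1, 3) - c) = s := by
    rw [← map_add]
    have : g + ((1, 3) - c) = A s + c - c := by rw [hsq]; ring
    rw [this, add_sub_cancel_right, A.symm_apply_apply]
  rw [this]
  exact hs
end

section
/- In the free group F on generators a, b, with Fox derivatives computed with the left-to-right convention, the 2×2 matrix of Fox derivatives of α = (ab⁻¹)^{n+1}b² and β = ba(ba⁻¹)^{n+1} with respect to a and b, after applying the abelianization map φ: ℤ[F] → ℤ[a^{±1},b^{±1}], has determinant equal (up to multiplication by ± a monomial) to (b/(a−b))·(a^{n+1}(1+b+b²+ab²) − b^{n+1}(1+a+ab+ab²)). -/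
/-- The generator `a` of the free group on two letters. -/
def ga : FreeGroup Bool := FreeGroup.of true
/-- The generator `b` of the free group on two letters. -/
def gb : FreeGroup Bool := FreeGroup.of false

/-- Group-ring element of a group element. -/
noncomputable def grp (g : FreeGroup Bool) : MonoidAlgebra ℤ (FreeGroup Bool) :=
  MonoidAlgebra.of ℤ (FreeGroup Bool) g

section aux
variable {G : Type} [Group G] {R : Type} [CommRing R]
  (ψ : G →* R) (D : G → R) (hD : ∀ u v : G, D (u * v) = D u + ψ u * D v)

include hD

lemma aux_one : D 1 = 0 := by
  have h := hD 1 1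
  simpa using h

lemma aux_inv (g : G) : D g⁻¹ = -(ψ g⁻¹ * D g) := by
  have h := hD g⁻¹ g
  rw [inv_mul_cancel, aux_one ψ D hD] at h
  linear_combination -h

lemma aux_pow (g : G) (m : ℕ) :
    D (g ^ m) = (∑ k ∈ Finset.range m, ψ g ^ k) * D g := by
  induction m with
  | zero => simp [aux_one ψ D hD]
  | succ m ih =>
      rw [pow_succ, hD, ih, map_pow, Finset.sum_range_succ]
      ring
end aux

/-- Let `dA, dB` be the Fox derivatives `∂/∂a, ∂/∂b` on `ℤ[F]`, `F` free on `a,b`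
(characterized by their values on generators and the left-to-right Leibniz rule),
and let `φ : ℤ[F] → ℤ[a^{±1},b^{±1}]` be induced by abelianization. For
`α = (ab⁻¹)^{n+1} b²` and `β = ba(ba⁻¹)^{n+1}`, the determinant
`φ(∂α/∂a)·φ(∂β/∂b) − φ(∂β/∂a)·φ(∂α/∂b)` equals, up to multiplication by
`± a^i b^j`, the element `t` with
`(a−b)·t = b·(a^{n+1}(1+b+b²+ab²) − b^{n+1}(1+a+ab+ab²))`. -/
theorem stmt11 (n : ℕ)
    (aug : MonoidAlgebra ℤ (FreeGroup Bool) →+* ℤ)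
    (haug : ∀ g : FreeGroup Bool, aug (grp g) = 1)
    (dA dB : MonoidAlgebra ℤ (FreeGroup Bool) →ₗ[ℤ] MonoidAlgebra ℤ (FreeGroup Bool))
    (hdAa : dA (grp ga) = 1) (hdAb : dA (grp gb) = 0)
    (hdBa : dB (grp ga) = 0) (hdBb : dB (grp gb) = 1)
    (hLeibA : ∀ u w, dA (u * w) = aug w • dA u + u * dA w)
    (hLeibB : ∀ u w, dB (u * w) = aug w • dB u + u * dB w)
    (φ : MonoidAlgebra ℤ (FreeGroup Bool) →+* AddMonoidAlgebra ℤ (ℤ × ℤ))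
    (hφa : φ (grp ga) = lmon 1 0) (hφb : φ (grp gb) = lmon 0 1)
    (t : AddMonoidAlgebra ℤ (ℤ × ℤ))
    (ht : (lmon 1 0 - lmon 0 1) * t =
      lmon 0 1 * ((lmon 1 0) ^ (n + 1) *
          (1 + lmon 0 1 + (lmon 0 1) ^ 2 + lmon 1 0 * (lmon 0 1) ^ 2)
        - (lmon 0 1) ^ (n + 1) *
          (1 + lmon 1 0 + lmon 1 0 * lmon 0 1 + lmon 1 0 * (lmon 0 1) ^ 2)))
    (α β : FreeGroup Bool)
    (hα : α = (ga * gb⁻¹) ^ (n + 1) * gb ^ 2)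
    (hβ : β = gb * ga * (gb * ga⁻¹) ^ (n + 1)) :
    ∃ (ε : ℤ) (i j : ℤ), (ε = 1 ∨ ε = -1) ∧
      φ (dA (grp α)) * φ (dB (grp β)) - φ (dA (grp β)) * φ (dB (grp α))
        = AddMonoidAlgebra.single ((i, j) : ℤ × ℤ) ε * t := by
  classical
  subst hα hβ
  -- abelianization as a monoid hom
  set ψ : FreeGroup Bool →* AddMonoidAlgebra ℤ (ℤ × ℤ) :=
    φ.toMonoidHom.comp (MonoidAlgebra.of ℤ (FreeGroup Bool)) with hψdef
  have hψ : ∀ g, ψ g = φ (grp g) := fun g => rfl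
  set DA : FreeGroup Bool → AddMonoidAlgebra ℤ (ℤ × ℤ) := fun g => φ (dA (grp g)) with hDAdef
  set DB : FreeGroup Bool → AddMonoidAlgebra ℤ (ℤ × ℤ) := fun g => φ (dB (grp g)) with hDBdef
  have hgrpmul : ∀ u v : FreeGroup Bool, grp (u * v) = grp u * grp v :=
    fun u v => map_mul (MonoidAlgebra.of ℤ (FreeGroup Bool)) u v
  have hDAmul : ∀ u v : FreeGroup Bool, DA (u * v) = DA u + ψ u * DA v := by
    intro u v
    show φ (dA (grp (u * v))) = φ (dA (grp u)) + φ (grp u) * φ (dA (grp v))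
    rw [hgrpmul, hLeibA, haug, one_smul, map_add, map_mul]
  have hDBmul : ∀ u v : FreeGroup Bool, DB (u * v) = DB u + ψ u * DB v := by
    intro u v
    show φ (dB (grp (u * v))) = φ (dB (grp u)) + φ (grp u) * φ (dB (grp v))
    rw [hgrpmul, hLeibB, haug, one_smul, map_add, map_mul]
  -- atoms
  set x := lmon 1 0 with hxdef
  set y := lmon 0 1 with hydef
  set x' := lmon (-1) 0 with hx'def
  set y' := lmon 0 (-1) with hy'def
  have hmm : ∀ i j k l : ℤ, lmon i j * lmon k l = lmon (i + k) (j + l) := by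
    intro i j k l
    simp [lmon, AddMonoidAlgebra.single_mul_single, Prod.mk_add_mk]
  have hone : lmon 0 0 = 1 := by
    simp [lmon, AddMonoidAlgebra.one_def]
    rfl
  have hx : x * x' = 1 := by rw [hxdef, hx'def, hmm]; norm_num [hone]
  have hy : y * y' = 1 := by rw [hydef, hy'def, hmm]; norm_num [hone]
  -- values of ψ
  have hψa : ψ ga = x := hφa
  have hψb : ψ gb = y := hφb
  have hψai : ψ ga⁻¹ = x' := by
    have h1 : ψ ga⁻¹ * x = 1 := by
      rw [← hψa, ← map_mul, inv_mul_cancel, map_one]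
    calc ψ ga⁻¹ = ψ ga⁻¹ * (x * x') := by rw [hx, mul_one]
      _ = (ψ ga⁻¹ * x) * x' := by ring
      _ = x' := by rw [h1, one_mul]
  have hψbi : ψ gb⁻¹ = y' := by
    have h1 : ψ gb⁻¹ * y = 1 := by
      rw [← hψb, ← map_mul, inv_mul_cancel, map_one]
    calc ψ gb⁻¹ = ψ gb⁻¹ * (y * y') := by rw [hy, mul_one]
      _ = (ψ gb⁻¹ * y) * y' := by ring
      _ = y' := by rw [h1, one_mul]
  -- values of DA, DB on generators and inverses
  have hDAa : DA ga = 1 := by show φ (dA (grp ga)) = 1; rw [hdAa, map_one]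
  have hDAb : DA gb = 0 := by show φ (dA (grp gb)) = 0; rw [hdAb, map_zero]
  have hDBa : DB ga = 0 := by show φ (dB (grp ga)) = 0; rw [hdBa, map_zero]
  have hDBb : DB gb = 1 := by show φ (dB (grp gb)) = 1; rw [hdBb, map_one]
  have hDAbi : DA gb⁻¹ = 0 := by
    rw [aux_inv ψ DA hDAmul, hDAb, mul_zero, neg_zero]
  have hDBbi : DB gb⁻¹ = -y' := by
    rw [aux_inv ψ DB hDBmul, hDBb, hψbi, mul_one]
  have hDAai : DA ga⁻¹ = -x' := by
    rw [aux_inv ψ DA hDAmul, hDAa, hψai, mul_one]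
  have hDBai : DB ga⁻¹ = 0 := by
    rw [aux_inv ψ DB hDBmul, hDBa, mul_zero, neg_zero]
  -- values on c = ga * gb⁻¹ and d = gb * ga⁻¹
  have hψc : ψ (ga * gb⁻¹) = x * y' := by rw [map_mul, hψa, hψbi]
  have hψd : ψ (gb * ga⁻¹) = y * x' := by rw [map_mul, hψb, hψai]
  have hDAc : DA (ga * gb⁻¹) = 1 := by
    rw [hDAmul, hDAa, hDAbi, mul_zero, add_zero]
  have hDBc : DB (ga * gb⁻¹) = -(x * y') := by
    rw [hDBmul, hDBa, hDBbi, hψa, zero_add, mul_neg]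
  have hDAd : DA (gb * ga⁻¹) = -(y * x') := by
    rw [hDAmul, hDAb, hDAai, hψb, zero_add, mul_neg]
  have hDBd : DB (gb * ga⁻¹) = 1 := by
    rw [hDBmul, hDBb, hDBai, mul_zero, add_zero]
  -- geometric sums
  set S : AddMonoidAlgebra ℤ (ℤ × ℤ) := ∑ k ∈ Finset.range (n + 1), (x * y') ^ k with hSdef
  set T : AddMonoidAlgebra ℤ (ℤ × ℤ) := ∑ k ∈ Finset.range (n + 1), (y * x') ^ k with hTdef
  have hS : S * (x * y' - 1) = (x * y') ^ (n + 1) - 1 := geom_sum_mul _ _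
  have hT : T * (y * x' - 1) = (y * x') ^ (n + 1) - 1 := geom_sum_mul _ _
  -- values on powers
  have hDAcp : DA ((ga * gb⁻¹) ^ (n + 1)) = S := by
    rw [aux_pow ψ DA hDAmul, hDAc, mul_one, hψc]
  have hDBcp : DB ((ga * gb⁻¹) ^ (n + 1)) = -(S * (x * y')) := by
    rw [aux_pow ψ DB hDBmul, hDBc, hψc, mul_neg]
  have hDAdp : DA ((gb * ga⁻¹) ^ (n + 1)) = -(T * (y * x')) := by
    rw [aux_pow ψ DA hDAmul, hDAd, hψd, mul_neg]
  have hDBdp : DB ((gb * ga⁻¹) ^ (n + 1)) = T := by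
    rw [aux_pow ψ DB hDBmul, hDBd, mul_one, hψd]
  have hψcp : ψ ((ga * gb⁻¹) ^ (n + 1)) = (x * y') ^ (n + 1) := by
    rw [map_pow, hψc]
  have hψba : ψ (gb * ga) = y * x := by rw [map_mul, hψa, hψb]
  -- squares of gb
  have hDAb2 : DA (gb ^ 2) = 0 := by
    rw [aux_pow ψ DA hDAmul, hDAb, mul_zero]
  have hDBb2 : DB (gb ^ 2) = 1 + y := by
    rw [aux_pow ψ DB hDBmul, hDBb, mul_one, hψb]
    simp [Finset.sum_range_succ]
  -- values on α and β
  have hDAα : DA ((ga * gb⁻¹) ^ (n + 1) * gb ^ 2) = S := by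
    rw [hDAmul, hDAcp, hDAb2, mul_zero, add_zero]
  have hDBα : DB ((ga * gb⁻¹) ^ (n + 1) * gb ^ 2)
      = (x * y') ^ (n + 1) * (1 + y) - S * (x * y') := by
    rw [hDBmul, hDBcp, hDBb2, hψcp]; ring
  have hDAβ : DA (gb * ga * (gb * ga⁻¹) ^ (n + 1))
      = y - y * x * (T * (y * x')) := by
    rw [hDAmul, hDAdp, hψba, hDAmul, hDAb, hDAa, hψb, zero_add, mul_one]
    ring
  have hDBβ : DB (gb * ga * (gb * ga⁻¹) ^ (n + 1))
      = 1 + y * x * T := by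
    rw [hDBmul, hDBdp, hψba, hDBmul, hDBb, hDBa, hψb, mul_zero, add_zero]
  -- the determinant
  show ∃ ε i j, (ε = 1 ∨ ε = -1) ∧
      DA ((ga * gb⁻¹) ^ (n + 1) * gb ^ 2) * DB (gb * ga * (gb * ga⁻¹) ^ (n + 1))
        - DA (gb * ga * (gb * ga⁻¹) ^ (n + 1)) * DB ((ga * gb⁻¹) ^ (n + 1) * gb ^ 2)
        = AddMonoidAlgebra.single ((i, j) : ℤ × ℤ) _ * t
  rw [hDAα, hDBα, hDAβ, hDBβ]
  -- key cancellations
  have h1 : (x - y) * S = y * ((x * y') ^ (n + 1) - 1) := by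
    linear_combination y * hS - x * S * hy
  have h2 : (x - y) * T = -(x * ((y * x') ^ (n + 1) - 1)) := by
    linear_combination (-x) * hT + y * T * hx
  have hX : x ^ (n + 1) * x' ^ (n + 1) = 1 := by
    rw [← mul_pow, hx, one_pow]
  have hY : y ^ (n + 1) * y' ^ (n + 1) = 1 := by
    rw [← mul_pow, hy, one_pow]
  set Det : AddMonoidAlgebra ℤ (ℤ × ℤ) :=
    S * (1 + y * x * T) - (y - y * x * (T * (y * x'))) *
      ((x * y') ^ (n + 1) * (1 + y) - S * (x * y')) with hDetdef
  have hne : x - y ≠ 0 := by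
    rw [hxdef, hydef]
    intro h
    have h2 := congrArg (fun f => f.coeff ((1 : ℤ), (0 : ℤ))) (sub_eq_zero.mp h)
    simp [lmon, AddMonoidAlgebra.coeff_single, Finsupp.single_apply] at h2
  have key : (x - y) * (y ^ (n + 1) * Det) = (x - y) * t := by
    rw [ht, hDetdef]
    linear_combination
      ((x - y) * y ^ (n + 1) * (x * S - x * y * S * T)) * hy
      + (-((x - y) * y ^ (n + 1) * x * y ^ 2 * y' * S * T)
          - x * y ^ 2 * (1 + y) * (y ^ (n + 1) - x ^ (n + 1))) * hx
      + (y ^ (n + 1) * (1 + x)) * h1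
      + (x * y ^ 2 * x' * (x * y') ^ (n + 1) * (1 + y) * y ^ (n + 1)) * h2
      + (-(x ^ 2 * y ^ 2 * x' * (1 + y) * y ^ (n + 1) * y ^ (n + 1) * y' ^ (n + 1))) * hX
      + ((1 + x) * y * x ^ (n + 1) - y * (1 + y) * (x - y) * x ^ (n + 1)
          - x ^ 2 * y ^ 2 * x' * (1 + y) * (y ^ (n + 1) - x ^ (n + 1))) * hY
  have h3 : y ^ (n + 1) * Det = t := mul_left_cancel₀ hne key
  have hfin : Det = y' ^ (n + 1) * t := by
    calc Det = (y' ^ (n + 1) * y ^ (n + 1)) * Det := by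
          rw [mul_comm (y' ^ (n+1)) (y ^ (n+1)), hY, one_mul]
      _ = y' ^ (n + 1) * (y ^ (n + 1) * Det) := by ring
      _ = y' ^ (n + 1) * t := by rw [h3]
  have hsingle : y' ^ (n + 1) = AddMonoidAlgebra.single (((0 : ℤ), -((n : ℤ) + 1)) : ℤ × ℤ) (1 : ℤ) := by
    rw [hy'def, lmon, AddMonoidAlgebra.single_pow, one_pow]
    congr 1
    simp [Prod.smul_mk]
  refine ⟨1, 0, -((n : ℤ) + 1), Or.inl rfl, ?_⟩
  rw [← hsingle, ← hfin, hDetdef]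
end

section
/- Let φ: ℤ[a^{±1},b^{±1},x^{±1}] → ℤ[a^{±1},u^{±1}] be the ring homomorphism with φ(a)=a, φ(x)=u², φ(b)=u³a⁻¹. Then φ(q_n(a,b)·(1+x+x²)) equals, up to multiplication by ± a monomial in a,u, the Laurent polynomial ((1+u²+u⁴)/(a²−u³))·((a²+u³a+u⁶a+u⁶)a^{2n+2} − u^{3n+3}(a³+a²+u³a²+u⁶a)), where the division is exact. -/
/-- The Laurent monomial `a^i b^j x^k` in `ℤ[a^{±1}, b^{±1}, x^{±1}] = ℤ[ℤ³]`. -/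
noncomputable def lmon3 (i j k : ℤ) : AddMonoidAlgebra ℤ (ℤ × ℤ × ℤ) :=
  AddMonoidAlgebra.single (i, j, k) 1

lemma lmon_mul (i j k l : ℤ) : lmon i j * lmon k l = lmon (i+k) (j+l) := by
  simp [lmon, AddMonoidAlgebra.single_mul_single, Prod.mk_add_mk]

lemma lmon_pow (m : ℕ) (i j : ℤ) : lmon i j ^ m = lmon (m*i) (m*j) := by
  induction m with
  | zero => simp [lmon, AddMonoidAlgebra.one_def]; rfl
  | succ k ih => rw [pow_succ, ih, lmon_mul]; congr 1 <;> push_cast <;> ring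

/-- Let `φ : ℤ[a^{±1},b^{±1},x^{±1}] → ℤ[a^{±1},u^{±1}]` be the ring homomorphism
with `φ(a) = a`, `φ(b) = u³a⁻¹`, `φ(x) = u²`, and let `q_n` satisfy
`(a−b)·q_n = b·(a^{n+1}(1+b+b²+ab²) − b^{n+1}(1+a+ab+ab²))`.  Then
`φ(q_n·(1+x+x²))` equals, up to multiplication by `± a^i u^j`, the unique `t`
with `(a²−u³)·t = (1+u²+u⁴)·((a²+u³a+u⁶a+u⁶)a^{2n+2} − u^{3n+3}(a³+a²+u³a²+u⁶a))`. -/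
theorem stmt15 (n : ℕ)
    (q : ℕ → AddMonoidAlgebra ℤ (ℤ × ℤ × ℤ))
    (hq : ∀ m : ℕ, (lmon3 1 0 0 - lmon3 0 1 0) * q m =
      lmon3 0 1 0 * ((lmon3 1 0 0) ^ (m + 1) *
          (1 + lmon3 0 1 0 + (lmon3 0 1 0) ^ 2 + lmon3 1 0 0 * (lmon3 0 1 0) ^ 2)
        - (lmon3 0 1 0) ^ (m + 1) *
          (1 + lmon3 1 0 0 + lmon3 1 0 0 * lmon3 0 1 0 + lmon3 1 0 0 * (lmon3 0 1 0) ^ 2)))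
    (φ : AddMonoidAlgebra ℤ (ℤ × ℤ × ℤ) →+* AddMonoidAlgebra ℤ (ℤ × ℤ))
    (hφa : φ (lmon3 1 0 0) = lmon 1 0)
    (hφb : φ (lmon3 0 1 0) = lmon (-1) 3)
    (hφx : φ (lmon3 0 0 1) = lmon 0 2)
    (t : AddMonoidAlgebra ℤ (ℤ × ℤ))
    (ht : ((lmon 1 0) ^ 2 - (lmon 0 1) ^ 3) * t =
      (1 + (lmon 0 1) ^ 2 + (lmon 0 1) ^ 4) *
        (((lmon 1 0) ^ 2 + (lmon 0 1) ^ 3 * lmon 1 0 + (lmon 0 1) ^ 6 * lmon 1 0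
            + (lmon 0 1) ^ 6) * (lmon 1 0) ^ (2 * n + 2)
          - (lmon 0 1) ^ (3 * n + 3) * ((lmon 1 0) ^ 3 + (lmon 1 0) ^ 2
            + (lmon 0 1) ^ 3 * (lmon 1 0) ^ 2 + (lmon 0 1) ^ 6 * lmon 1 0))) :
    ∃ (ε : ℤ) (i j : ℤ), (ε = 1 ∨ ε = -1) ∧
      φ (q n * (1 + lmon3 0 0 1 + (lmon3 0 0 1) ^ 2))
        = AddMonoidAlgebra.single ((i, j) : ℤ × ℤ) ε * t := by
  refine ⟨1, -(n+3 : ℤ), 3, Or.inl rfl, ?_⟩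
  have hsingle : (AddMonoidAlgebra.single ((-(n+3 : ℤ), (3:ℤ)) : ℤ × ℤ) (1:ℤ))
      = lmon (-(n+3 : ℤ)) 3 := rfl
  rw [hsingle]
  have hc : (lmon 1 0)^2 - (lmon 0 1)^3 ≠ 0 := by
    intro h0
    have h1 := congrArg (fun f => AddMonoidAlgebra.coeff f ((2:ℤ),(0:ℤ))) (sub_eq_zero.mp h0)
    rw [lmon_pow, lmon_pow] at h1
    simp only [lmon] at h1
    norm_num [AddMonoidAlgebra.coeff_single, Finsupp.single_apply, Prod.ext_iff] at h1
  apply mul_left_cancel₀ hc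
  have himg := congrArg φ (hq n)
  simp only [map_mul, map_sub, map_add, map_pow, map_one, hφa, hφb] at himg
  rw [map_mul, map_add, map_add, map_one, map_pow, hφx]
  rw [mul_left_comm _ (lmon (-(n+3 : ℤ)) 3), ht]
  have hfac : (lmon 1 0)^2 - (lmon 0 1)^3 = lmon 1 0 * (lmon 1 0 - lmon (-1) 3) := by
    rw [mul_sub, lmon_mul, lmon_mul, lmon_pow, lmon_pow]; norm_num
  have h2 : ((lmon 1 0)^2 - (lmon 0 1)^3) *
      (φ (q n) * (1 + lmon 0 2 + lmon 0 2 ^ 2)) =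
      lmon 1 0 * (1 + lmon 0 2 + lmon 0 2 ^ 2) *
        ((lmon 1 0 - lmon (-1) 3) * φ (q n)) := by
    rw [hfac]; ring
  rw [h2, himg]
  simp only [lmon_pow, lmon_mul, mul_add, add_mul, mul_sub, sub_mul, mul_one, one_mul]
  push_cast
  ring_nf
end

section
/- The Laurent polynomial τ'(b,x) = ((1+x+x²)/(x³−b⁴))·(x^{3n+3}(b⁵+b⁴+b³+x³b²) − b^{4n+4}(b³+x³b²+x³b+x³)) is well-defined (the division by x³−b⁴ is exact) and its coefficients sum to 6+12n, for every n ≥ 0. -/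
/-- In `ℤ[b^{±1},x^{±1}]`, the element
`(1+x+x²)·(x^{3n+3}(b⁵+b⁴+b³+x³b²) − b^{4n+4}(b³+x³b²+x³b+x³))` is divisible by
`x³−b⁴`, and the quotient has coefficient sum `6+12n`, for every `n ≥ 0`. -/
theorem stmt16 (n : ℕ)
    (σ : AddMonoidAlgebra ℤ (ℤ × ℤ) →+* ℤ)
    (hσ : ∀ (g : ℤ × ℤ) (c : ℤ), σ (AddMonoidAlgebra.single g c) = c) :
    (((lmon 0 1) ^ 3 - (lmon 1 0) ^ 4) ∣
      (1 + lmon 0 1 + (lmon 0 1) ^ 2) *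
        ((lmon 0 1) ^ (3 * n + 3) * ((lmon 1 0) ^ 5 + (lmon 1 0) ^ 4 + (lmon 1 0) ^ 3
            + (lmon 0 1) ^ 3 * (lmon 1 0) ^ 2)
          - (lmon 1 0) ^ (4 * n + 4) * ((lmon 1 0) ^ 3 + (lmon 0 1) ^ 3 * (lmon 1 0) ^ 2
            + (lmon 0 1) ^ 3 * lmon 1 0 + (lmon 0 1) ^ 3))) ∧
    ∀ t : AddMonoidAlgebra ℤ (ℤ × ℤ),
      ((lmon 0 1) ^ 3 - (lmon 1 0) ^ 4) * t =
        (1 + lmon 0 1 + (lmon 0 1) ^ 2) *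
          ((lmon 0 1) ^ (3 * n + 3) * ((lmon 1 0) ^ 5 + (lmon 1 0) ^ 4 + (lmon 1 0) ^ 3
              + (lmon 0 1) ^ 3 * (lmon 1 0) ^ 2)
            - (lmon 1 0) ^ (4 * n + 4) * ((lmon 1 0) ^ 3 + (lmon 0 1) ^ 3 * (lmon 1 0) ^ 2
              + (lmon 0 1) ^ 3 * lmon 1 0 + (lmon 0 1) ^ 3)) →
      σ t = 6 + 12 * (n : ℤ) := by
  set x : AddMonoidAlgebra ℤ (ℤ × ℤ) := lmon 0 1 with hx
  set b : AddMonoidAlgebra ℤ (ℤ × ℤ) := lmon 1 0 with hb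
  -- the explicit quotient
  set S : AddMonoidAlgebra ℤ (ℤ × ℤ) :=
    ∑ i ∈ Finset.range (n + 1), (x ^ 3) ^ i * (b ^ 4) ^ (n - i) with hS
  set t₀ : AddMonoidAlgebra ℤ (ℤ × ℤ) :=
    (1 + x + x ^ 2) * (S * (b ^ 5 + b ^ 4 + b ^ 3 + x ^ 3 * b ^ 2)
      - (b ^ 4) ^ (n + 1) * (b + 1)) with ht₀
  have hgeom : (x ^ 3 - b ^ 4) * S = (x ^ 3) ^ (n + 1) - (b ^ 4) ^ (n + 1) := by
    rw [mul_comm, hS]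
    have := geom_sum₂_mul (x ^ 3) (b ^ 4) (n + 1)
    simpa using this
  have hxp : x ^ (3 * n + 3) = (x ^ 3) ^ (n + 1) := by
    rw [← pow_mul]; ring_nf
  have hbp : b ^ (4 * n + 4) = (b ^ 4) ^ (n + 1) := by
    rw [← pow_mul]; ring_nf
  have key : (x ^ 3 - b ^ 4) * t₀ =
      (1 + x + x ^ 2) *
        (x ^ (3 * n + 3) * (b ^ 5 + b ^ 4 + b ^ 3 + x ^ 3 * b ^ 2)
          - b ^ (4 * n + 4) * (b ^ 3 + x ^ 3 * b ^ 2 + x ^ 3 * b + x ^ 3)) := by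
    rw [hxp, hbp, ht₀]
    have : (x ^ 3 - b ^ 4) *
        ((1 + x + x ^ 2) * (S * (b ^ 5 + b ^ 4 + b ^ 3 + x ^ 3 * b ^ 2)
          - (b ^ 4) ^ (n + 1) * (b + 1))) =
      (1 + x + x ^ 2) * (((x ^ 3 - b ^ 4) * S) * (b ^ 5 + b ^ 4 + b ^ 3 + x ^ 3 * b ^ 2)
        - (b ^ 4) ^ (n + 1) * ((x ^ 3 - b ^ 4) * (b + 1))) := by ring
    rw [this, hgeom]; ring
  have hne : x ^ 3 - b ^ 4 ≠ 0 := by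
    intro h
    have h2 : (x ^ 3 - b ^ 4).coeff ((0:ℤ),(3:ℤ)) = 0 := by rw [h]; rfl
    rw [AddMonoidAlgebra.coeff_sub] at h2
    simp [hx, hb, lmon, AddMonoidAlgebra.single_pow,
      AddMonoidAlgebra.coeff_single_apply] at h2
  have hσ1 : ∀ i j : ℤ, σ (lmon i j) = 1 := fun i j => hσ (i, j) 1
  have hσt₀ : σ t₀ = 6 + 12 * (n : ℤ) := by
    rw [ht₀]
    simp only [map_mul, map_add, map_sub, map_pow, map_one, hS, map_sum, hx, hb, hσ1]
    simp [Finset.sum_const, mul_comm]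
    ring
  refine ⟨⟨t₀, key.symm⟩, fun t ht => ?_⟩
  have : t = t₀ := mul_left_cancel₀ hne (by rw [ht, key])
  rw [this, hσt₀]
end
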